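/- Let π be a uniformly random permutation of [N], X₁,...,X_N fixed, X̄ = (1/N)Σ X_l, and X^π_{≥k} = (1/(N+1-k))Σ_{i=k}^N X_{π(i)}. For fixed matrices W₁,...,W_N, the average over all permutations π of Σ_{k=1}^N W_{π(k)}(X_{π(k)} - X^π_{≥k}) equals (1/(1+ε_N))·Σ_{k=1}^N (W_k - W̄)X_k, where W̄ = (1/N)Σ W_k and ε_N = (H_N-1)/(N-H_N). -/

import Mathlib

/-!
For a uniform random permutation `σ`, the pair `(σ k, σ i)` is uniform on the diagonal when
`k = i` and uniform on the off-diagonal pairs when `k ≠ i` (orbit averaging). Hence the `k`-th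
summand averages to `(1 - 1/(N-k))` times the gap between the diagonal and off-diagonal means of
`W_a X_b`, and that gap is `(N-1)⁻¹ ∑ₖ (Wₖ - W̄) Xₖ`. Summing `1 - 1/(N-k)` over `k` gives
`N - H_N = (N-1)/(1+ε_N)`.
-/

open Matrix Finset

/-- The `n`-th harmonic number `H_n = 1 + 1/2 + ⋯ + 1/n`. -/
noncomputable def harmonic' (n : ℕ) : ℝ := ∑ j ∈ Finset.range n, (1 : ℝ) / (j + 1)

/-- `ε_n = (H_n - 1)/(n - H_n)`. -/
noncomputable def epsN (n : ℕ) : ℝ := (harmonic' n - 1) / ((n : ℝ) - harmonic' n)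

section OrbitAverage

variable {G β M : Type*} [Group G] [Fintype G] [MulAction G β]

theorem card_nsmul_sum_smul_eq [AddCommMonoid M] {s : Finset β} {x : β}
    (hs : ∀ g : G, ∀ y ∈ s, g • y ∈ s) (htrans : ∀ y ∈ s, ∃ g : G, g • x = y) (F : β → M) :
    #s • ∑ g : G, F (g • x) = Fintype.card G • ∑ y ∈ s, F y := by
  have horbit : ∀ y ∈ s, ∑ g : G, F (g • y) = ∑ g : G, F (g • x) := by
    rintro y hy
    obtain ⟨h, rfl⟩ := htrans y hy
    simp_rw [smul_smul]
    exact Fintype.sum_equiv (Equiv.mulRight h) _ _ fun _ => rfl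
  have hinv : ∀ g : G, ∑ y ∈ s, F (g • y) = ∑ y ∈ s, F y := fun g =>
    Finset.sum_equiv (MulAction.toPerm g)
      (fun y => ⟨hs g y, fun hy => by simpa using hs g⁻¹ _ hy⟩) (fun _ _ => rfl)
  calc #s • ∑ g : G, F (g • x) = ∑ y ∈ s, ∑ g : G, F (g • y) := by
        rw [sum_congr rfl horbit, sum_const]
    _ = ∑ g : G, ∑ y ∈ s, F (g • y) := sum_comm
    _ = Fintype.card G • ∑ y ∈ s, F y := by
        rw [sum_congr rfl fun g _ => hinv g, sum_const, card_univ]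

theorem inv_card_smul_sum_smul_eq {K : Type*} [Field K] [CharZero K] [AddCommGroup M]
    [Module K M] {s : Finset β} {x : β} (hx : x ∈ s)
    (hs : ∀ g : G, ∀ y ∈ s, g • y ∈ s) (htrans : ∀ y ∈ s, ∃ g : G, g • x = y) (F : β → M) :
    (Fintype.card G : K)⁻¹ • ∑ g : G, F (g • x) = (#s : K)⁻¹ • ∑ y ∈ s, F y := by
  have hG : (Fintype.card G : K) ≠ 0 := by exact_mod_cast Fintype.card_ne_zero
  have hsK : (#s : K) ≠ 0 := by exact_mod_cast (card_pos.mpr ⟨x, hx⟩).ne'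
  have h := card_nsmul_sum_smul_eq hs htrans F
  rw [← Nat.cast_smul_eq_nsmul K, ← Nat.cast_smul_eq_nsmul K] at h
  rw [inv_smul_eq_iff₀ hG, smul_comm, eq_inv_smul_iff₀ hsK, h]

end OrbitAverage

section PermAverage

open Equiv Fintype
open scoped Nat

variable {α K M : Type*} [DecidableEq α] [Field K] [CharZero K]
  [AddCommGroup M] [Module K M]

theorem exists_perm_apply_apply {k i k' i' : α} (h : k ≠ i) (h' : k' ≠ i') :
    ∃ τ : Perm α, τ k = k' ∧ τ i = i' := by
  set τ₁ := swap k k'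
  have hi : τ₁ i ≠ k' := fun hi => h (τ₁.injective (hi.trans (swap_apply_left k k').symm)).symm
  refine ⟨τ₁.trans (swap (τ₁ i) i'), ?_, ?_⟩
  · simp [τ₁, swap_apply_of_ne_of_ne (Ne.symm hi) h']
  · simp [τ₁]

theorem average_perm_apply [Fintype α] (g : α → M) (k : α) :
    ((card α)! : K)⁻¹ • ∑ σ : Perm α, g (σ k) = (card α : K)⁻¹ • ∑ a, g a := by
  rw [← Fintype.card_perm, ← Finset.card_univ (α := α)]
  exact inv_card_smul_sum_smul_eq (mem_univ k) (fun _ _ _ => mem_univ _)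
    (fun y _ => ⟨swap k y, swap_apply_left k y⟩) g

theorem average_perm_apply_apply [Fintype α] (f : α → α → M) {k i : α} (hki : k ≠ i) :
    ((card α)! : K)⁻¹ • ∑ σ : Perm α, f (σ k) (σ i) =
      ((card α : K) * (card α - 1))⁻¹ • ∑ x ∈ univ.offDiag, f x.1 x.2 := by
  have hcard : (#(univ : Finset α).offDiag : K) = card α * (card α - 1) := by
    rw [offDiag_card, Finset.card_univ, Nat.cast_sub (Nat.le_mul_self _)]
    push_cast; ring
  rw [← Fintype.card_perm, ← hcard]
  exact inv_card_smul_sum_smul_eq (G := Perm α) (x := (k, i)) (by simpa using hki)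
    (fun σ y hy => by simpa [Perm.smul_def] using hy)
    (fun y hy => by
      obtain ⟨τ, h1, h2⟩ := exists_perm_apply_apply hki (mem_offDiag.mp hy).2.2
      exact ⟨τ, by simp [Perm.smul_def, h1, h2]⟩)
    (fun x => f x.1 x.2)

theorem average_perm_sub_mean [Fintype α] (f : α → α → M) {s : Finset α} {k : α} (hk : k ∈ s) :
    ((card α)! : K)⁻¹ • ∑ σ : Perm α, (f (σ k) (σ k) - (#s : K)⁻¹ • ∑ i ∈ s, f (σ k) (σ i)) =
      (1 - (#s : K)⁻¹) • ((card α : K)⁻¹ • ∑ a, f a a -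
        ((card α : K) * (card α - 1))⁻¹ • ∑ x ∈ univ.offDiag, f x.1 x.2) := by
  set c : K := ((card α)! : K)⁻¹
  set diag := (card α : K)⁻¹ • ∑ a, f a a
  set off := ((card α : K) * (card α - 1))⁻¹ • ∑ x ∈ univ.offDiag, f x.1 x.2
  have hdiag : c • ∑ σ : Perm α, f (σ k) (σ k) = diag := average_perm_apply (fun a => f a a) k
  have hrow : c • ∑ i ∈ s, ∑ σ : Perm α, f (σ k) (σ i) = diag + (#s - 1 : K) • off := by
    rw [smul_sum, ← add_sum_erase s _ hk, hdiag,
      Finset.sum_congr rfl fun i hi => average_perm_apply_apply f (ne_of_mem_erase hi).symm,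
      sum_const, card_erase_of_mem hk, ← Nat.cast_smul_eq_nsmul K,
      Nat.cast_sub (card_pos.mpr ⟨k, hk⟩), Nat.cast_one]
  have hs : (#s : K) ≠ 0 := by exact_mod_cast (card_pos.mpr ⟨k, hk⟩).ne'
  rw [sum_sub_distrib, smul_sub, hdiag, ← smul_sum, smul_comm, sum_comm, hrow]
  linear_combination (norm := module) -(mul_inv_cancel₀ hs • off)

end PermAverage

theorem harmonic'_lt_self {n : ℕ} (hn : 2 ≤ n) : harmonic' n < n := by
  have h := sum_lt_sum (s := range n) (f := fun j : ℕ => (1 : ℝ) / (j + 1)) (g := fun _ => 1)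
    (fun j _ => by rw [div_le_one (by positivity)]; exact le_add_of_nonneg_left (by positivity))
    ⟨1, mem_range.2 (by omega), by norm_num⟩
  simpa [harmonic'] using h

theorem sum_inv_sub_eq_harmonic' (n : ℕ) : ∑ k : Fin n, ((n : ℝ) - k)⁻¹ = harmonic' n := by
  rw [Fin.sum_univ_eq_sum_range (fun j => ((n : ℝ) - j)⁻¹), ← sum_range_reflect, harmonic']
  refine sum_congr rfl fun j hj => ?_
  rw [mem_range] at hj
  rw [show n - 1 - j = n - (j + 1) by omega, Nat.cast_sub (by omega : j + 1 ≤ n), one_div]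
  push_cast
  ring_nf

theorem inv_one_add_epsN {n : ℕ} (hn : 2 ≤ n) :
    (1 + epsN n)⁻¹ = ((n : ℝ) - harmonic' n) / (n - 1) := by
  have hH : (n : ℝ) - harmonic' n ≠ 0 := (sub_pos.mpr (harmonic'_lt_self hn)).ne'
  rw [epsN, one_add_div hH, inv_div]
  ring_nf

section MatrixSums

open Equiv
open scoped Nat

variable {ι m n o K : Type*} [Fintype ι] [Fintype n]

theorem sum_offDiag_mul_eq [DecidableEq ι] [Ring K] (W : ι → Matrix m n K) (X : ι → Matrix n o K) :
    ∑ x ∈ univ.offDiag, W x.1 * X x.2 = (∑ a, W a) * (∑ b, X b) - ∑ a, W a * X a := by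
  rw [eq_sub_iff_add_eq, ← sum_diag (f := fun x : ι × ι => W x.1 * X x.2), add_comm,
    ← sum_union (disjoint_diag_offDiag _), diag_union_offDiag, univ_product_univ,
    Fintype.sum_prod_type, Matrix.sum_mul]
  simp only [Matrix.mul_sum]

theorem sum_sub_smul_sum_mul [CommRing K] (W : ι → Matrix m n K) (X : ι → Matrix n o K) (c : K) :
    ∑ k, (W k - c • ∑ j, W j) * X k = ∑ k, W k * X k - c • ((∑ j, W j) * ∑ k, X k) := by
  simp only [Matrix.sub_mul, Matrix.smul_mul, sum_sub_distrib, ← smul_sum, ← Matrix.mul_sum]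

theorem average_perm_mul_sub_tail_mean [Field K] [CharZero K] {N : ℕ}
    (W : Fin N → Matrix m n K) (X : Fin N → Matrix n o K) (k : Fin N) :
    ((N ! : K))⁻¹ • ∑ σ : Perm (Fin N),
        W (σ k) * (X (σ k) - ((N : K) - (k : ℕ))⁻¹ • ∑ i ∈ univ.filter (fun i => k ≤ i), X (σ i)) =
      (1 - ((N : K) - (k : ℕ))⁻¹) • ((N : K)⁻¹ • ∑ a, W a * X a -
        ((N : K) * (N - 1))⁻¹ • ((∑ a, W a) * (∑ b, X b) - ∑ a, W a * X a)) := by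
  have hcard : (N : K) - (k : ℕ) = (#(univ.filter (fun i => k ≤ i)) : K) := by
    rw [filter_le_eq_Ici, Fin.card_Ici, Nat.cast_sub k.is_lt.le]
  have h := average_perm_sub_mean (K := K) (fun a b => W a * X b)
    (mem_filter.mpr ⟨mem_univ k, le_refl k⟩)
  rw [Fintype.card_fin, sum_offDiag_mul_eq] at h
  rw [hcard]
  simpa only [Matrix.mul_sub, Matrix.mul_smul, Matrix.mul_sum] using h

end MatrixSums

/-- The permutation-average of `∑ₖ W_{π(k)}(X_{π(k)} - X^π_{≥k})`, where
`X^π_{≥k} = (1/(N+1-k))·∑_{i=k}^N X_{π(i)}`, equals `(1/(1+ε_N))·∑ₖ (Wₖ - W̄)Xₖ`. -/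
theorem perm_average_centered_sum
    {N p q r : ℕ} (hN : 2 ≤ N)
    (W : Fin N → Matrix (Fin p) (Fin q) ℝ)
    (X : Fin N → Matrix (Fin q) (Fin r) ℝ) :
    ((N.factorial : ℝ))⁻¹ •
        ∑ σ : Equiv.Perm (Fin N), ∑ k : Fin N,
          W (σ k) *
            (X (σ k) -
              ((N : ℝ) - (k : ℕ))⁻¹ •
                ∑ i ∈ Finset.univ.filter (fun i => k ≤ i), X (σ i)) =
      (1 + epsN N)⁻¹ • ∑ k, (W k - ((N : ℝ))⁻¹ • ∑ j, W j) * X k := by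
  set A := ∑ a, W a * X a
  set B := (∑ a, W a) * ∑ b, X b
  have hgap : (N : ℝ)⁻¹ • A - ((N : ℝ) * (N - 1))⁻¹ • (B - A) =
      ((N : ℝ) - 1)⁻¹ • (A - (N : ℝ)⁻¹ • B) := by
    have hN1 : (N : ℝ) - 1 ≠ 0 := by
      have : (2 : ℝ) ≤ N := by exact_mod_cast hN
      linarith
    have hN0 : (N : ℝ) ≠ 0 := by positivity
    match_scalars
    · field_simp; ring
    · field_simp
  calc _ = ∑ k : Fin N, (1 - ((N : ℝ) - (k : ℕ))⁻¹) • ((N : ℝ) - 1)⁻¹ • (A - (N : ℝ)⁻¹ • B) := by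
        rw [sum_comm, smul_sum]
        exact sum_congr rfl fun k _ => (average_perm_mul_sub_tail_mean W X k).trans (by rw [hgap])
    _ = ((N : ℝ) - harmonic' N) • ((N : ℝ) - 1)⁻¹ • (A - (N : ℝ)⁻¹ • B) := by
        rw [← sum_smul, sum_sub_distrib, sum_inv_sub_eq_harmonic', sum_const, card_univ,
          Fintype.card_fin, nsmul_one]
    _ = _ := by rw [sum_sub_smul_sum_mul, inv_one_add_epsN hN, smul_smul, div_eq_mul_inv]
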